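/- No-tie invariant of the bakery system (Example 3): for every event stream es and every position n, the trace σ of es under step3 from initial state (T,T,0,0), with σ n = (s1, s2, t1, t2), satisfies: if s1 = W and s2 = W then t1 ≠ t2; consequently from any reachable state with both processes waiting, exactly one of the transitions Take1 (when t1 < t2) and Take2 (when t2 < t1) changes the state. -/

import Mathlib

inductive ProcState : Type where
  | T | W | U
deriving DecidableEq

inductive Event : Type where
  | request1 | request2 | take1 | take2 | release1 | release2
deriving DecidableEq

/-- The trace of an event stream under a transition function from an initial state. -/
def trace {S : Type} (step : Event → S → S) (s0 : S) (es : ℕ → Event) : ℕ → S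
  | 0 => s0
  | n + 1 => step (es n) (trace step s0 es n)

/-- An event stream is fair if every event occurs infinitely often. -/
def Fair (es : ℕ → Event) : Prop := ∀ (e : Event) (n : ℕ), ∃ m, n ≤ m ∧ es m = e

/-- Transition function of Example 3 (Lamport's bakery algorithm for two processes).
The state is `(s1, s2, t1, t2)` where `t1`, `t2` are the ticket numbers. -/
def step3 : Event → ProcState × ProcState × ℕ × ℕ → ProcState × ProcState × ℕ × ℕ
  | .request1, (s1, s2, t1, t2) =>
      if s1 = ProcState.T then (.W, s2, t2 + 1, t2) else (s1, s2, t1, t2)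
  | .request2, (s1, s2, t1, t2) =>
      if s2 = ProcState.T then (s1, .W, t1, t1 + 1) else (s1, s2, t1, t2)
  | .take1, (s1, s2, t1, t2) =>
      if s1 = ProcState.W ∧ (s2 = ProcState.T ∨ t1 < t2) then (.U, s2, t1, t2)
      else (s1, s2, t1, t2)
  | .take2, (s1, s2, t1, t2) =>
      if s2 = ProcState.W ∧ (s1 = ProcState.T ∨ t2 < t1) then (s1, .U, t1, t2)
      else (s1, s2, t1, t2)
  | .release1, (s1, s2, t1, t2) =>
      if s1 = ProcState.U then (.T, s2, 0, t2) else (s1, s2, t1, t2)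
  | .release2, (s1, s2, t1, t2) =>
      if s2 = ProcState.U then (s1, .T, t1, 0) else (s1, s2, t1, t2)

theorem trace_induction {S : Type} {step : Event → S → S} {s0 : S} (P : S → Prop)
    (h0 : P s0) (hstep : ∀ e s, P s → P (step e s)) (es : ℕ → Event) (n : ℕ) :
    P (trace step s0 es n) := by
  induction n with
  | zero => exact h0
  | succ n ih => exact hstep _ _ ih

/-- Stated for "not thinking" rather than "waiting" so that it survives `Take`: a request hands
out the other process's ticket plus one, and no other event changes a ticket without sending its
holder back to thinking. -/
def NoTie : ProcState × ProcState × ℕ × ℕ → Prop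
  | (s1, s2, t1, t2) => s1 ≠ .T → s2 ≠ .T → t1 ≠ t2

theorem noTie_step3 (e : Event) {s : ProcState × ProcState × ℕ × ℕ} (h : NoTie s) :
    NoTie (step3 e s) := by
  obtain ⟨s1, s2, t1, t2⟩ := s
  cases e <;> simp only [step3] <;> split_ifs <;> simp_all [NoTie]

theorem noTie_trace_step3 (es : ℕ → Event) (n : ℕ) :
    NoTie (trace step3 (.T, .T, 0, 0) es n) :=
  trace_induction NoTie (by simp [NoTie]) (fun e _ => noTie_step3 e) es n

theorem step3_take1_eq_self_iff {t1 t2 : ℕ} :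
    step3 .take1 (.W, .W, t1, t2) = (.W, .W, t1, t2) ↔ t2 ≤ t1 := by
  simp [step3]

theorem step3_take2_eq_self_iff {t1 t2 : ℕ} :
    step3 .take2 (.W, .W, t1, t2) = (.W, .W, t1, t2) ↔ t1 ≤ t2 := by
  simp [step3]

/-- No-tie invariant of the bakery system: in any reachable state in which both
processes are waiting, the two tickets differ; consequently exactly one of the
transitions `Take1` and `Take2` changes the state. -/
theorem bakery_no_tie_invariant :
    ∀ (es : ℕ → Event) (n : ℕ),
      (trace step3 (ProcState.T, ProcState.T, 0, 0) es n).1 = ProcState.W →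
      (trace step3 (ProcState.T, ProcState.T, 0, 0) es n).2.1 = ProcState.W →
      (trace step3 (ProcState.T, ProcState.T, 0, 0) es n).2.2.1 ≠
        (trace step3 (ProcState.T, ProcState.T, 0, 0) es n).2.2.2 ∧
      ((step3 Event.take1 (trace step3 (ProcState.T, ProcState.T, 0, 0) es n) ≠
          trace step3 (ProcState.T, ProcState.T, 0, 0) es n ∧
        step3 Event.take2 (trace step3 (ProcState.T, ProcState.T, 0, 0) es n) =
          trace step3 (ProcState.T, ProcState.T, 0, 0) es n) ∨
       (step3 Event.take1 (trace step3 (ProcState.T, ProcState.T, 0, 0) es n) =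
          trace step3 (ProcState.T, ProcState.T, 0, 0) es n ∧
        step3 Event.take2 (trace step3 (ProcState.T, ProcState.T, 0, 0) es n) ≠
          trace step3 (ProcState.T, ProcState.T, 0, 0) es n)) := by
  intro es n
  have hinv := noTie_trace_step3 es n
  generalize trace step3 (.T, .T, 0, 0) es n = s at hinv ⊢
  obtain ⟨s1, s2, t1, t2⟩ := s
  intro (hs1 : s1 = .W) (hs2 : s2 = .W)
  subst hs1 hs2
  have htie : t1 ≠ t2 := hinv (by decide) (by decide)
  refine ⟨htie, ?_⟩
  rcases htie.lt_or_gt with h | h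
  · exact .inl ⟨fun heq => (step3_take1_eq_self_iff.1 heq).not_gt h,
      step3_take2_eq_self_iff.2 h.le⟩
  · exact .inr ⟨step3_take1_eq_self_iff.2 h.le,
      fun heq => (step3_take2_eq_self_iff.1 heq).not_gt h⟩
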